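/- If G is a connected graph with no triangles, then the phylogeny number of G equals |E(G)| - |V(G)| + 1. -/

import Mathlib

open SimpleGraph

/-- Adjacency in the phylogeny graph of a digraph `D`: `u ≠ v` and either an arc between
them or a common out-neighbor. -/
def phyAdj {α : Type*} (D : α → α → Prop) (u v : α) : Prop :=
  u ≠ v ∧ (D u v ∨ D v u ∨ ∃ w, D u w ∧ D v w)

/-- `D`, a digraph on the vertices of `G` together with `r` extra vertices, is a
phylogeny digraph for `G`: it is acyclic, `G` is the subgraph of the phylogeny graph
induced on `V(G)`, and there are no arcs from the extra vertices into `V(G)`. -/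
def IsPhyDigraphOn {V : Type*} (G : SimpleGraph V) (r : ℕ)
    (D : (V ⊕ Fin r) → (V ⊕ Fin r) → Prop) : Prop :=
  (∀ x, ¬ Relation.TransGen D x x) ∧
  (∀ u v : V, G.Adj u v ↔ phyAdj D (Sum.inl u) (Sum.inl v)) ∧
  (∀ (j : Fin r) (v : V), ¬ D (Sum.inr j) (Sum.inl v))

/-- The phylogeny number `p(G)`: the least number of extra vertices in a phylogeny
digraph for `G`. -/
noncomputable def phylogenyNumber {V : Type*} (G : SimpleGraph V) : ℕ :=
  sInf {r | ∃ D, IsPhyDigraphOn G r D}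

/-- The competition number `k(G)`: the least `k` so that `G` together with `k` isolated
vertices is the competition graph of an acyclic digraph. -/
noncomputable def competitionNumber {V : Type*} (G : SimpleGraph V) : ℕ :=
  sInf {k | ∃ D : (V ⊕ Fin k) → (V ⊕ Fin k) → Prop,
    (∀ x, ¬ Relation.TransGen D x x) ∧
    (∀ a b, (a ≠ b ∧ ∃ c, D a c ∧ D b c) ↔
      (∃ u v : V, a = Sum.inl u ∧ b = Sum.inl v ∧ G.Adj u v))}

/-- The number of triangles of `G`. -/
noncomputable def triangleCount {V : Type*} (G : SimpleGraph V) : ℕ :=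
  Set.ncard {S : Finset V | G.IsNClique 3 S}

/-- `S` carries a diamond (`K₄` minus an edge) subgraph of `G`. -/
def IsDiamondOn {V : Type*} (G : SimpleGraph V) (S : Finset V) : Prop :=
  ∃ x y z w : V, (S : Set V) = {x, y, z, w} ∧
    x ≠ y ∧ x ≠ z ∧ x ≠ w ∧ y ≠ z ∧ y ≠ w ∧ z ≠ w ∧
    G.Adj x y ∧ G.Adj x z ∧ G.Adj x w ∧ G.Adj y z ∧ G.Adj z w ∧ ¬ G.Adj y w

/-- The number of diamonds of `G`. -/
noncomputable def diamondCount {V : Type*} (G : SimpleGraph V) : ℕ :=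
  Set.ncard {S : Finset V | IsDiamondOn G S}

/-- The diamonds of `G` are mutually edge-disjoint. -/
def EdgeDisjointDiamonds {V : Type*} (G : SimpleGraph V) : Prop :=
  ∀ S₁ S₂ : Finset V, IsDiamondOn G S₁ → IsDiamondOn G S₂ → S₁ ≠ S₂ →
    ∀ u v, G.Adj u v → u ∈ S₁ → v ∈ S₁ → u ∈ S₂ → v ∈ S₂ → False

/-- `G⁻`: the graph obtained from `G` by deleting every edge lying on a triangle. -/
def triangleEdgeDeleted {V : Type*} (G : SimpleGraph V) : SimpleGraph V where
  Adj u v := G.Adj u v ∧ ∀ w, ¬ (G.Adj u w ∧ G.Adj v w)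
  symm := ⟨fun u v h => ⟨h.1.symm, fun w hw => h.2 w ⟨hw.2, hw.1⟩⟩⟩
  loopless := ⟨fun v h => G.irrefl h.1⟩

/-- The edge clique cover number `θₑ(G)`. -/
noncomputable def edgeCliqueCoverNumber {V : Type*} (G : SimpleGraph V) : ℕ :=
  sInf {n | ∃ F : Fin n → Set V, (∀ i, G.IsClique (F i)) ∧
    ∀ u v, G.Adj u v → ∃ i, u ∈ F i ∧ v ∈ F i}

/-- `s` is a maximal clique of the graph `G`. -/
def IsMaxCliqueOf {V : Type*} (G : SimpleGraph V) (s : Set V) : Prop :=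
  G.IsClique s ∧ ∀ t, G.IsClique t → s ⊆ t → s = t

/-- `s` is a clique of the subgraph `H` of `G`. -/
def CliqueInSub {V : Type*} {G : SimpleGraph V} (H : G.Subgraph) (s : Set V) : Prop :=
  s ⊆ H.verts ∧ s.Pairwise H.Adj

/-- `s` is a maximal clique of the subgraph `H` of `G`. -/
def MaxCliqueInSub {V : Type*} {G : SimpleGraph V} (H : G.Subgraph) (s : Set V) : Prop :=
  CliqueInSub H s ∧ ∀ t, CliqueInSub H t → s ⊆ t → s = t

/-- `s` is a clique of the graph with adjacency `X` and vertex set `S`. -/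
def CliqueRel {α : Type*} (X : SimpleGraph α) (S s : Set α) : Prop :=
  s ⊆ S ∧ X.IsClique s

/-- `s` is a maximal clique of the graph with adjacency `X` and vertex set `S`. -/
def MaxCliqueRel {α : Type*} (X : SimpleGraph α) (S s : Set α) : Prop :=
  CliqueRel X S s ∧ ∀ t, CliqueRel X S t → s ⊆ t → s = t

/-- `v` is a cut-vertex of `G`: some two other vertices are connected in `G` but every
walk between them passes through `v`. -/
def IsCutVertex {V : Type*} (G : SimpleGraph V) (v : V) : Prop :=
  ∃ u w, u ≠ v ∧ w ≠ v ∧ G.Reachable u w ∧ ∀ p : G.Walk u w, v ∈ p.support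

/-- `B` is a block of `G`: a maximal connected subgraph without a cut-vertex. -/
def IsBlockSub {V : Type*} {G : SimpleGraph V} (B : G.Subgraph) : Prop :=
  B.coe.Connected ∧ (∀ v, ¬ IsCutVertex B.coe v) ∧
  ∀ B' : G.Subgraph, B ≤ B' → B'.coe.Connected →
    (∀ v, ¬ IsCutVertex B'.coe v) → B' = B


private lemma measure_acyclic {α : Type*} {D : α → α → Prop} {f : α → ℕ}
    (h : ∀ a b, D a b → f a < f b) : ∀ x, ¬ Relation.TransGen D x x := by
  have key : ∀ a b, Relation.TransGen D a b → f a < f b := by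
    intro a b hab
    induction hab with
    | single h' => exact h _ _ h'
    | tail _ h' ih => exact ih.trans (h _ _ h')
  exact fun x hx => lt_irrefl _ (key x x hx)

private lemma exists_source' {α : Type*} [Finite α] [Nonempty α] (R : α → α → Prop)
    (h : ∀ x, ¬ Relation.TransGen R x x) : ∃ v, ∀ u, ¬ R u v := by
  haveI : IsTrans α (Relation.TransGen R) := ⟨fun _ _ _ h1 h2 => h1.trans h2⟩
  haveI : IsIrrefl α (Relation.TransGen R) := ⟨h⟩
  obtain ⟨v, -, hv⟩ := (Finite.wellFounded_of_trans_of_irrefl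
    (Relation.TransGen R)).has_min Set.univ ⟨Classical.arbitrary α, trivial⟩
  exact ⟨v, fun u hu => hv u trivial (Relation.TransGen.single hu)⟩

private lemma exists_parent' {V : Type*} (G : SimpleGraph V) (hconn : G.Connected)
    (v0 v : V) (hv : v ≠ v0) : ∃ u, G.Adj u v ∧ G.dist v0 u < G.dist v0 v := by
  obtain ⟨p, hp⟩ := (hconn v0 v).exists_walk_length_eq_dist
  cases hq : p.reverse with
  | nil => exact absurd rfl hv
  | cons h q =>
    rename_i u
    refine ⟨u, h.symm, ?_⟩
    have h1 : G.dist v0 u ≤ q.reverse.length := SimpleGraph.dist_le _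
    have h2 : q.length + 1 = p.length := by
      have := congrArg SimpleGraph.Walk.length hq
      simp [SimpleGraph.Walk.length_reverse] at this
      omega
    simp [SimpleGraph.Walk.length_reverse] at h1
    omega

private lemma dist_lt_card' {V : Type*} [Fintype V] (G : SimpleGraph V) {u v : V}
    (h : G.Reachable u v) : G.dist u v < Fintype.card V := by
  classical
  obtain ⟨p⟩ := h
  exact lt_of_le_of_lt (SimpleGraph.dist_le p.bypass) p.bypass_isPath.length_lt

private lemma lower_bound {V : Type*} [Fintype V] (G : SimpleGraph V)
    (hconn : G.Connected) (htf : G.CliqueFree 3) (r : ℕ)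
    (D : (V ⊕ Fin r) → (V ⊕ Fin r) → Prop) (hD : IsPhyDigraphOn G r D) :
    G.edgeSet.ncard + 1 ≤ Fintype.card V + r := by
  classical
  haveI : Nonempty V := hconn.nonempty
  obtain ⟨hac, hiff, -⟩ := hD
  have notri : ∀ a b c : V, G.Adj a b → G.Adj a c → G.Adj b c → False := by
    intro a b c hab hac' hbc
    exact htf {a, b, c} (SimpleGraph.is3Clique_triple_iff.2 ⟨hab, hac', hbc⟩)
  have harc : ∀ u v : V, D (Sum.inl u) (Sum.inl v) → G.Adj u v := by
    intro u v h
    have hne : u ≠ v := by rintro rfl; exact hac _ (Relation.TransGen.single h)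
    exact (hiff u v).2 ⟨fun he => hne (Sum.inl_injective he), Or.inl h⟩
  have hprey : ∀ (u v : V) (w : V ⊕ Fin r), u ≠ v → D (Sum.inl u) w → D (Sum.inl v) w →
      G.Adj u v := by
    intro u v w hne hu hv
    exact (hiff u v).2 ⟨fun he => hne (Sum.inl_injective he), Or.inr (Or.inr ⟨w, hu, hv⟩)⟩
  have L1 : ∀ u u' v : V, D (Sum.inl u) (Sum.inl v) → D (Sum.inl u') (Sum.inl v) → u = u' := by
    intro u u' v hu hu'
    by_contra hne
    exact notri u u' v (hprey u u' _ hne hu hu') (harc _ _ hu) (harc _ _ hu')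
  -- source vertex
  obtain ⟨vs, hvs⟩ := exists_source' (fun u v : V => D (Sum.inl u) (Sum.inl v)) (by
    intro x hx
    exact hac (Sum.inl x) (hx.lift Sum.inl (fun _ _ h => h)))
  -- witnesses
  set Wit : (V ⊕ Fin r) → Sym2 V → Prop := fun w s => ∃ u v : V, s = s(u, v) ∧
    ((w = Sum.inl v ∧ D (Sum.inl u) (Sum.inl v)) ∨
     (u ≠ v ∧ D (Sum.inl u) w ∧ D (Sum.inl v) w)) with hWit
  have exW : ∀ s ∈ G.edgeSet, ∃ w, Wit w s := by
    intro s hs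
    induction s with
    | _ u v =>
      rw [SimpleGraph.mem_edgeSet] at hs
      obtain ⟨hne', hcase⟩ := (hiff u v).1 hs
      have hne : u ≠ v := hs.ne
      rcases hcase with h | h | ⟨w, hu, hv⟩
      · exact ⟨Sum.inl v, u, v, rfl, Or.inl ⟨rfl, h⟩⟩
      · exact ⟨Sum.inl u, v, u, Sym2.eq_swap.symm, Or.inl ⟨rfl, h⟩⟩
      · exact ⟨w, u, v, rfl, Or.inr ⟨hne, hu, hv⟩⟩
  have uniqW : ∀ w s s', Wit w s → Wit w s' → s = s' := by
    rintro w s s' ⟨u, v, rfl, hc⟩ ⟨u', v', rfl, hc'⟩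
    rcases hc with ⟨rfl, hd⟩ | ⟨hne, hu, hv⟩
    · rcases hc' with ⟨he, hd'⟩ | ⟨hne', hu', hv'⟩
      · have hvv : v' = v := (Sum.inl_injective he).symm
        subst hvv
        rw [L1 u u' _ hd hd']
      · exact absurd (L1 u' v' v hu' hv') hne'
    · rcases hc' with ⟨rfl, hd'⟩ | ⟨hne', hu', hv'⟩
      · exact absurd (L1 u v v' hu hv) hne
      · -- both prey type at w
        have adjuv : G.Adj u v := hprey u v w hne hu hv
        have key : ∀ x : V, D (Sum.inl x) w → x = u ∨ x = v := by
          intro x hx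
          by_contra hcon
          push_neg at hcon
          exact notri u v x adjuv (hprey u x w (Ne.symm hcon.1) hu hx)
            (hprey v x w (Ne.symm hcon.2) hv hx)
        rcases key u' hu' with rfl | rfl <;> rcases key v' hv' with rfl | rfl
        · exact absurd rfl hne'
        · rfl
        · exact Sym2.eq_swap.symm
        · exact absurd rfl hne'
  have noWs : ∀ s, ¬ Wit (Sum.inl vs) s := by
    rintro s ⟨u, v, rfl, ⟨he, hd⟩ | ⟨hne, hu, hv⟩⟩
    · have hvv : v = vs := (Sum.inl_injective he).symm
      subst hvv
      exact hvs u hd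
    · exact hvs u hu
  -- injective map
  set F : Sym2 V → (V ⊕ Fin r) := fun s =>
    if h : ∃ w, Wit w s then h.choose else Sum.inl vs with hF
  have hFW : ∀ s ∈ G.edgeSet, Wit (F s) s := by
    intro s hs
    have h := exW s hs
    simp only [hF, dif_pos h]
    exact h.choose_spec
  have hinj : Set.InjOn F G.edgeSet := by
    intro s hs s' hs' he
    exact uniqW (F s) s s' (hFW s hs) (he ▸ hFW s' hs')
  have hsub : F '' G.edgeSet ⊆ ({Sum.inl vs}ᶜ : Set (V ⊕ Fin r)) := by
    rintro w ⟨s, hs, rfl⟩ hmem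
    exact noWs s (Set.eq_of_mem_singleton hmem ▸ hFW s hs)
  have h1 : (F '' G.edgeSet).ncard = G.edgeSet.ncard := Set.ncard_image_of_injOn hinj
  have h2 : (F '' G.edgeSet).ncard ≤ ({Sum.inl vs}ᶜ : Set (V ⊕ Fin r)).ncard :=
    Set.ncard_le_ncard hsub (Set.toFinite _)
  have h3 : ({(Sum.inl vs : V ⊕ Fin r)} : Set (V ⊕ Fin r)).ncard
      + ({Sum.inl vs}ᶜ : Set (V ⊕ Fin r)).ncard = Fintype.card V + r := by
    rw [Set.ncard_add_ncard_compl, Nat.card_eq_fintype_card]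
    simp
  have h4 := Set.ncard_singleton (Sum.inl vs : V ⊕ Fin r)
  omega

private lemma upper_bound {V : Type*} [Fintype V] (G : SimpleGraph V) (hconn : G.Connected) :
    Fintype.card V - 1 ≤ G.edgeSet.ncard ∧
    ∃ D : (V ⊕ Fin (G.edgeSet.ncard - (Fintype.card V - 1))) →
      (V ⊕ Fin (G.edgeSet.ncard - (Fintype.card V - 1))) → Prop,
      IsPhyDigraphOn G (G.edgeSet.ncard - (Fintype.card V - 1)) D := by
  classical
  haveI : Nonempty V := hconn.nonempty
  set r0 := G.edgeSet.ncard - (Fintype.card V - 1) with hr0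
  obtain ⟨v0⟩ := (inferInstance : Nonempty V)
  have hpar : ∀ v : V, v ≠ v0 → ∃ u, G.Adj u v ∧ G.dist v0 u < G.dist v0 v :=
    fun v hv => exists_parent' G hconn v0 v hv
  let P : V → V := fun v => if h : v ≠ v0 then (hpar v h).choose else v0
  have hP1 : ∀ v, v ≠ v0 → G.Adj (P v) v := by
    intro v hv; simp only [P, dif_pos hv]; exact (hpar v hv).choose_spec.1
  have hP2 : ∀ v, v ≠ v0 → G.dist v0 (P v) < G.dist v0 v := by
    intro v hv; simp only [P, dif_pos hv]; exact (hpar v hv).choose_spec.2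
  set T : Set (Sym2 V) := (fun v => s(P v, v)) '' {v | v ≠ v0} with hT
  have treeInj : Set.InjOn (fun v => s(P v, v)) {v | v ≠ v0} := by
    intro a ha b hb hab
    rcases Sym2.eq_iff.1 hab with ⟨h1, h2⟩ | ⟨h1, h2⟩
    · exact h2
    · exfalso
      have ha' := hP2 a ha
      have hb' := hP2 b hb
      rw [h1] at ha'
      rw [← h2] at hb'
      omega
  have hcompl : ({v | v ≠ v0} : Set V) = ({v0}ᶜ : Set V) := by ext x; simp
  have hcardc : ({v0}ᶜ : Set V).ncard = Fintype.card V - 1 := by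
    have := Set.ncard_add_ncard_compl ({v0} : Set V)
    rw [Set.ncard_singleton, Nat.card_eq_fintype_card] at this
    omega
  have hTcard : T.ncard = Fintype.card V - 1 := by
    rw [hT, Set.ncard_image_of_injOn treeInj, hcompl, hcardc]
  have hTsub : T ⊆ G.edgeSet := by
    rintro _ ⟨v, hv, rfl⟩
    exact G.mem_edgeSet.2 (hP1 v hv)
  have hnm : Fintype.card V - 1 ≤ G.edgeSet.ncard := by
    rw [← hTcard]; exact Set.ncard_le_ncard hTsub (Set.toFinite _)
  set NT : Set (Sym2 V) := G.edgeSet \ T with hNT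
  have hNTcard : NT.ncard = r0 := by
    rw [hNT, Set.ncard_diff hTsub, hTcard, hr0]
  have hNTfin : Fintype.card ↥NT = r0 := by
    rw [← Nat.card_eq_fintype_card, Nat.card_coe_set_eq, hNTcard]
  let e : ↥NT ≃ Fin r0 := Fintype.equivFinOfCardEq hNTfin
  let D : (V ⊕ Fin r0) → (V ⊕ Fin r0) → Prop := fun x y =>
    match x, y with
    | Sum.inl u, Sum.inl v => v ≠ v0 ∧ u = P v
    | Sum.inl u, Sum.inr j => u ∈ ((e.symm j : ↥NT) : Sym2 V)
    | Sum.inr _, _ => False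
  refine ⟨hnm, D, ?_, ?_, ?_⟩
  · refine measure_acyclic (f := Sum.elim (fun v => G.dist v0 v) (fun _ => Fintype.card V)) ?_
    rintro (u | i) (v | j) h
    · have h' : v ≠ v0 ∧ u = P v := h
      simp only [Sum.elim_inl]
      rw [h'.2]
      exact hP2 v h'.1
    · simpa using dist_lt_card' G (hconn v0 u)
    · exact (h : False).elim
    · exact (h : False).elim
  · intro u v
    constructor
    · intro hadj
      have hne : u ≠ v := hadj.ne
      refine ⟨fun he => hne (Sum.inl_injective he), ?_⟩
      by_cases ht : s(u, v) ∈ T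
      · obtain ⟨x, hx, hxe⟩ := ht
        rcases Sym2.eq_iff.1 hxe with ⟨h1, h2⟩ | ⟨h1, h2⟩
        · subst h2
          exact Or.inl (show x ≠ v0 ∧ u = P x from ⟨hx, h1.symm⟩)
        · subst h2
          exact Or.inr (Or.inl (show x ≠ v0 ∧ v = P x from ⟨hx, h1.symm⟩))
      · have hnt : s(u, v) ∈ NT := ⟨G.mem_edgeSet.2 hadj, ht⟩
        refine Or.inr (Or.inr ⟨Sum.inr (e ⟨s(u, v), hnt⟩), ?_, ?_⟩)
        · show u ∈ ((e.symm (e ⟨s(u, v), hnt⟩) : ↥NT) : Sym2 V)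
          rw [Equiv.symm_apply_apply]
          exact Sym2.mem_mk_left u v
        · show v ∈ ((e.symm (e ⟨s(u, v), hnt⟩) : ↥NT) : Sym2 V)
          rw [Equiv.symm_apply_apply]
          exact Sym2.mem_mk_right u v
    · rintro ⟨hne, h | h | ⟨w, hw1, hw2⟩⟩
      · have h' : v ≠ v0 ∧ u = P v := h
        rw [h'.2]
        exact hP1 v h'.1
      · have h' : u ≠ v0 ∧ v = P u := h
        rw [h'.2]
        exact (hP1 u h'.1).symm
      · cases w with
        | inl x =>
          have h1 : x ≠ v0 ∧ u = P x := hw1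
          have h2 : x ≠ v0 ∧ v = P x := hw2
          exact absurd (h1.2.trans h2.2.symm) fun he => hne (congrArg Sum.inl he)
        | inr j =>
          have h1 : u ∈ ((e.symm j : ↥NT) : Sym2 V) := hw1
          have h2 : v ∈ ((e.symm j : ↥NT) : Sym2 V) := hw2
          have hne' : u ≠ v := fun he => hne (congrArg Sum.inl he)
          have heq := (Sym2.mem_and_mem_iff hne').1 ⟨h1, h2⟩
          have hmem := (e.symm j).2.1
          rw [heq] at hmem
          exact G.mem_edgeSet.1 hmem
  · intro j v h
    exact (h : False)

theorem stmt0 {V : Type*} [Fintype V] (G : SimpleGraph V)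
    (hconn : G.Connected) (htf : G.CliqueFree 3) :
    (phylogenyNumber G : ℤ) = G.edgeSet.ncard - Fintype.card V + 1 := by
  classical
  haveI : Nonempty V := hconn.nonempty
  obtain ⟨hnm, D0, hD0⟩ := upper_bound G hconn
  have hmem : G.edgeSet.ncard - (Fintype.card V - 1) ∈ {r | ∃ D, IsPhyDigraphOn G r D} :=
    ⟨D0, hD0⟩
  have hlb : ∀ r ∈ {r | ∃ D, IsPhyDigraphOn G r D},
      G.edgeSet.ncard - (Fintype.card V - 1) ≤ r := by
    rintro r ⟨D, hD⟩
    have := lower_bound G hconn htf r D hD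
    omega
  have hinf : phylogenyNumber G = G.edgeSet.ncard - (Fintype.card V - 1) :=
    le_antisymm (Nat.sInf_le hmem) (le_csInf ⟨_, hmem⟩ hlb)
  rw [hinf]
  have hcard : 1 ≤ Fintype.card V := Fintype.card_pos
  omega
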